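/- arXiv:2511.00014 — 10 statements merged into one kernel-verified Lean document; each statement's English description precedes it below -/
import Mathlib

section
/- If ρ ⊆ A^m is a generalized quasiorder with m ≥ 2, then Δρ = {(a₁,…,a_{m-1}) : (a₁,a₁,a₂,…,a_{m-1}) ∈ ρ} (identification of the first two coordinates) is a generalized quasiorder on A of arity m-1. -/
/-- An m-ary relation is generalized transitive if whenever every row and every
column of an m×m matrix belongs to it, so does the diagonal. -/
def IsGenTransitive {A : Type*} {m : ℕ} (ρ : Set (Fin m → A)) : Prop :=
  ∀ M : Fin m → Fin m → A,
    (∀ i, (fun j => M i j) ∈ ρ) → (∀ j, (fun i => M i j) ∈ ρ) →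
    (fun i => M i i) ∈ ρ

/-- A generalized quasiorder: reflexive and generalized transitive. -/
def IsGQuord {A : Type*} {m : ℕ} (ρ : Set (Fin m → A)) : Prop :=
  (∀ a : A, (fun _ => a) ∈ ρ) ∧ IsGenTransitive ρ

/-- Identification of the first two coordinates of a relation of arity m+1
(so the original arity m+1 ≥ 2 automatically, and the result has arity m ≥ 1). -/
theorem delta_gQuord {A : Type*} {m : ℕ} (hm : 1 ≤ m)
    (ρ : Set (Fin (m + 1) → A)) (h : IsGQuord ρ) :
    IsGQuord {a : Fin m → A | Fin.cons (a ⟨0, hm⟩) a ∈ ρ} := by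
  obtain ⟨hrefl, htrans⟩ := h
  have key : ∀ g : Fin m → A,
      (fun j : Fin (m+1) => g (Fin.cases ⟨0, hm⟩ id j)) = Fin.cons (g ⟨0, hm⟩) g := by
    intro g
    funext j
    induction j using Fin.cases <;> simp
  constructor
  · intro a
    have : Fin.cons (a : A) (fun _ : Fin m => a) = fun _ => a := by
      funext j; induction j using Fin.cases <;> simp
    simpa [Set.mem_setOf_eq, this] using hrefl a
  · intro M hrow hcol
    set f : Fin (m+1) → Fin m := Fin.cases ⟨0, hm⟩ id with hf
    have hd := htrans (fun i j => M (f i) (f j))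
      (fun i => by show (fun j => M (f i) (f j)) ∈ ρ; rw [show (fun j => M (f i) (f j)) = Fin.cons (M (f i) ⟨0, hm⟩) (M (f i)) from key (M (f i))]; exact hrow (f i))
      (fun j => by show (fun i => M (f i) (f j)) ∈ ρ; rw [show (fun i => M (f i) (f j)) = Fin.cons (M ⟨0, hm⟩ (f j)) (fun i => M i (f j)) from key (fun i => M i (f j))]; exact hcol (f j))
    have : (fun i : Fin (m+1) => M (f i) (f i))
        = Fin.cons (M ⟨0, hm⟩ ⟨0, hm⟩) (fun i => M i i) := by
      funext j; induction j using Fin.cases <;> simp [hf]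
    simpa [Set.mem_setOf_eq, this] using hd
end

section
/- For a nonempty subset B ⊆ A, the restriction map ρ ↦ ρ ∩ B^m maps m-ary generalized quasiorders on A onto generalized quasiorders on B; moreover every generalized quasiorder on B arises as such a restriction. -/
/-! Restriction to `B` is pullback along the inclusion `B → A`, and pullback along any map
preserves generalized quasiorders. Conversely, a generalized quasiorder on `B` is the restriction
of its pullback along a retraction `A → B`, which exists because `B` is nonempty. -/

theorem IsGQuord.comap {X Y : Type*} {m : ℕ} {ρ : Set (Fin m → Y)} (hρ : IsGQuord ρ)
    (f : X → Y) : IsGQuord {x : Fin m → X | (fun i => f (x i)) ∈ ρ} :=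
  ⟨fun x => hρ.1 (f x), fun M hrows hcols => hρ.2 (fun i j => f (M i j)) hrows hcols⟩

theorem restriction_gQuord {A : Type*} {m : ℕ} (B : Set A) (hB : B.Nonempty) :
    (∀ ρ : Set (Fin m → A), IsGQuord ρ →
        IsGQuord {b : Fin m → B | (fun i => (b i : A)) ∈ ρ}) ∧
    (∀ σ : Set (Fin m → B), IsGQuord σ →
        ∃ ρ : Set (Fin m → A), IsGQuord ρ ∧
          {b : Fin m → B | (fun i => (b i : A)) ∈ ρ} = σ) := by
  have : Nonempty B := hB.to_subtype
  have hretract : Function.LeftInverse (Function.invFun Subtype.val) ((↑) : B → A) :=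
    Function.leftInverse_invFun Subtype.val_injective
  refine ⟨fun ρ hρ => hρ.comap Subtype.val,
    fun σ hσ => ⟨_, hσ.comap (Function.invFun Subtype.val), ?_⟩⟩
  ext b
  simp only [Set.mem_ofPred_eq, hretract _]
end

section
/- Let λ : A → B be a surjective map and ρ ⊆ A^m a generalized quasiorder with λ⁻¹(λ(ρ)) = ρ. Then λ(ρ) = {(λa₁,…,λa_m) : (a₁,…,a_m) ∈ ρ} is a generalized quasiorder on B. -/
section Image

variable {A B : Type*} {m : ℕ} {ρ : Set (Fin m → A)} {f : A → B}

theorem const_mem_image_comp (hρ : ∀ a : A, (fun _ => a) ∈ ρ) (hf : Function.Surjective f)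
    (b : B) : (fun _ => b) ∈ (f ∘ ·) '' ρ := by
  obtain ⟨a, rfl⟩ := hf b
  exact ⟨fun _ => a, hρ a, rfl⟩

/-- Saturation of `ρ` is what puts the rows and columns of an entrywise lift of the matrix
back into `ρ`. -/
theorem IsGenTransitive.image_comp (hρ : IsGenTransitive ρ) (hf : Function.Surjective f)
    (hsat : (f ∘ ·) ⁻¹' ((f ∘ ·) '' ρ) ⊆ ρ) : IsGenTransitive ((f ∘ ·) '' ρ) := by
  intro N hrow hcol
  have hlift : ∀ b : Fin m → B, f ∘ (Function.surjInv hf ∘ b) = b := fun b =>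
    funext fun i => Function.surjInv_eq hf (b i)
  let M i j := Function.surjInv hf (N i j)
  have hrowM : ∀ i, (fun j => M i j) ∈ ρ := fun i =>
    hsat <| show f ∘ (Function.surjInv hf ∘ fun j => N i j) ∈ _ by rw [hlift]; exact hrow i
  have hcolM : ∀ j, (fun i => M i j) ∈ ρ := fun j =>
    hsat <| show f ∘ (Function.surjInv hf ∘ fun i => N i j) ∈ _ by rw [hlift]; exact hcol j
  exact ⟨fun i => M i i, hρ M hrowM hcolM, hlift fun i => N i i⟩

theorem IsGQuord.image_comp (hρ : IsGQuord ρ) (hf : Function.Surjective f)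
    (hsat : (f ∘ ·) ⁻¹' ((f ∘ ·) '' ρ) ⊆ ρ) : IsGQuord ((f ∘ ·) '' ρ) :=
  ⟨const_mem_image_comp hρ.1 hf, hρ.2.image_comp hf hsat⟩

end Image

theorem image_gQuord {A B : Type*} {m : ℕ} (lam : A → B)
    (hsurj : Function.Surjective lam) (ρ : Set (Fin m → A)) (h : IsGQuord ρ)
    (hfull : {a : Fin m → A | lam ∘ a ∈ {b : Fin m → B | ∃ a' ∈ ρ, b = lam ∘ a'}} = ρ) :
    IsGQuord {b : Fin m → B | ∃ a ∈ ρ, b = lam ∘ a} := by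
  have himage : {b : Fin m → B | ∃ a ∈ ρ, b = lam ∘ a} = (lam ∘ ·) '' ρ := by
    ext b
    simp only [Set.mem_ofPred_eq, Set.mem_image, eq_comm]
  rw [himage] at hfull ⊢
  exact h.image_comp hsurj hfull.subset
end

section
/- If ρ ⊆ A^m is a generalized quasiorder, then its absolutely symmetric part abs(ρ) = {(a₁,…,a_m) : {a₁,…,a_m}^m ⊆ ρ} is a generalized equivalence relation (i.e., a totally symmetric generalized quasiorder), and it equals the totally symmetric part tos(ρ) = {(a₁,…,a_m) : for every permutation α of {1,…,m}, (a_{α1},…,a_{αm}) ∈ ρ}. -/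
/-- Totally symmetric: closed under all permutations of coordinates. -/
def IsTotSym {A : Type*} {m : ℕ} (ρ : Set (Fin m → A)) : Prop :=
  ∀ a ∈ ρ, ∀ π : Equiv.Perm (Fin m), a ∘ π ∈ ρ

/-- Generalized equivalence relation. -/
def IsGEquiv {A : Type*} {m : ℕ} (ρ : Set (Fin m → A)) : Prop :=
  IsGQuord ρ ∧ IsTotSym ρ

/-- Absolutely symmetric part. -/
def absPart {A : Type*} {m : ℕ} (ρ : Set (Fin m → A)) : Set (Fin m → A) :=
  {a | ∀ t : Fin m → A, (∀ i, ∃ j, t i = a j) → t ∈ ρ}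

/-- Totally symmetric part. -/
def tosPart {A : Type*} {m : ℕ} (ρ : Set (Fin m → A)) : Set (Fin m → A) :=
  {a | ∀ π : Equiv.Perm (Fin m), a ∘ π ∈ ρ}

/-! ### Auxiliary material -/

namespace GQAux

open Equiv Function

/-- The elementary collapse map: `p ↦ q`, identity elsewhere. -/
def clps {m : ℕ} (p q : Fin m) : Fin m → Fin m := fun i => if i = p then q else i

lemma clps_self {m : ℕ} (p q : Fin m) : clps p q p = q := by simp [clps]

lemma clps_other {m : ℕ} {p q i : Fin m} (h : i ≠ p) : clps p q i = i := by simp [clps, h]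

/-- A permutation sending two prescribed points to two prescribed points. -/
lemma exists_perm₂ {α : Type*} [DecidableEq α] {a b x y : α}
    (hab : a ≠ b) (hxy : x ≠ y) :
    ∃ π : Equiv.Perm α, π a = x ∧ π b = y := by
  classical
  set σ1 : Equiv.Perm α := Equiv.swap a x with hσ1
  set σ2 : Equiv.Perm α := Equiv.swap (σ1 b) y with hσ2
  refine ⟨σ1.trans σ2, ?_, ?_⟩
  · have h1 : σ1 a = x := Equiv.swap_apply_left a x
    have h2 : σ1 b ≠ x := by
      rw [← h1]; exact fun hc => hab (σ1.injective hc).symm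
    simp only [Equiv.trans_apply, h1, hσ2]
    exact Equiv.swap_apply_of_ne_of_ne (Ne.symm h2) hxy
  · simp only [Equiv.trans_apply, hσ2]
    exact Equiv.swap_apply_left _ _

/-- A permutation sending three prescribed points to three prescribed points. -/
lemma exists_perm₃ {α : Type*} [DecidableEq α] {a b c x y z : α}
    (hab : a ≠ b) (hac : a ≠ c) (hbc : b ≠ c)
    (hxy : x ≠ y) (hxz : x ≠ z) (hyz : y ≠ z) :
    ∃ π : Equiv.Perm α, π a = x ∧ π b = y ∧ π c = z := by
  classical
  set σ1 : Equiv.Perm α := Equiv.swap a x with hσ1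
  set σ2 : Equiv.Perm α := Equiv.swap (σ1 b) y with hσ2
  set σ3 : Equiv.Perm α := Equiv.swap (σ2 (σ1 c)) z with hσ3
  have h1a : σ1 a = x := Equiv.swap_apply_left a x
  have h1bx : σ1 b ≠ x := by
    rw [← h1a]; exact fun hc => hab (σ1.injective hc).symm
  have h2a : σ2 (σ1 a) = x := by
    rw [h1a, hσ2]; exact Equiv.swap_apply_of_ne_of_ne (Ne.symm h1bx) hxy
  have h2b : σ2 (σ1 b) = y := by rw [hσ2]; exact Equiv.swap_apply_left _ _
  have h21ca : σ2 (σ1 c) ≠ x := by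
    rw [← h2a]; exact fun hc => hac (σ1.injective (σ2.injective hc)).symm
  have h21cb : σ2 (σ1 c) ≠ y := by
    rw [← h2b]; exact fun hc => hbc (σ1.injective (σ2.injective hc)).symm
  refine ⟨(σ1.trans σ2).trans σ3, ?_, ?_, ?_⟩
  · simp only [Equiv.trans_apply, h2a, hσ3]
    exact Equiv.swap_apply_of_ne_of_ne (Ne.symm h21ca) hxz
  · simp only [Equiv.trans_apply, h2b, hσ3]
    exact Equiv.swap_apply_of_ne_of_ne (Ne.symm h21cb) hyz
  · simp only [Equiv.trans_apply, hσ3]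
    exact Equiv.swap_apply_left _ _

end GQAux


namespace GQAux

open Function
open Fin.NatCast
open Fin.CommRing

variable {A : Type*} {m : ℕ} {ρ : Set (Fin m → A)}

/-! ### Even case: decomposition of a collapse as a pointwise sum of two permutations -/

def esig (m k : ℕ) [NeZero m] : Fin m → Fin m := fun x =>
  if x.val = 0 then ((k : ℕ) : Fin m)
  else if x.val % 2 = 1 then (((x.val - 1) / 2 : ℕ) : Fin m)
  else ((x.val / 2 + k : ℕ) : Fin m)

def etau (m k : ℕ) [NeZero m] : Fin m → Fin m := fun x =>
  if x.val = 0 then 0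
  else if x.val % 2 = 1 then (((x.val + 1) / 2 : ℕ) : Fin m)
  else ((x.val / 2 + k : ℕ) : Fin m)

lemma esig_surj [NeZero m] {k : ℕ} (hm : m = 2 * k) : Surjective (esig m k) := by
  intro y
  rcases lt_trichotomy y.val k with hy | hy | hy
  · refine ⟨((2 * y.val + 1 : ℕ) : Fin m), ?_⟩
    have hv : ((2 * y.val + 1 : ℕ) : Fin m).val = 2 * y.val + 1 :=
      Fin.val_cast_of_lt (by omega)
    simp only [esig, hv]
    rw [if_neg (by omega), if_pos (by omega),
      show (2 * y.val + 1 - 1) / 2 = y.val by omega, Fin.cast_val_eq_self]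
  · refine ⟨0, ?_⟩
    have : esig m k 0 = ((k : ℕ) : Fin m) := by simp [esig, Fin.val_zero]
    rw [this, ← hy, Fin.cast_val_eq_self]
  · refine ⟨((2 * (y.val - k) : ℕ) : Fin m), ?_⟩
    have hym : y.val < m := y.isLt
    have hv : ((2 * (y.val - k) : ℕ) : Fin m).val = 2 * (y.val - k) :=
      Fin.val_cast_of_lt (by omega)
    simp only [esig, hv]
    rw [if_neg (by omega), if_neg (by omega),
      show 2 * (y.val - k) / 2 + k = y.val by omega, Fin.cast_val_eq_self]

lemma etau_surj [NeZero m] {k : ℕ} (hm : m = 2 * k) : Surjective (etau m k) := by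
  intro y
  by_cases h0 : y.val = 0
  · refine ⟨0, ?_⟩
    have hy0 : y = 0 := Fin.ext (by rw [h0, Fin.val_zero])
    rw [hy0]
    simp [etau, Fin.val_zero]
  rcases le_or_gt y.val k with hy | hy
  · refine ⟨((2 * y.val - 1 : ℕ) : Fin m), ?_⟩
    have hv : ((2 * y.val - 1 : ℕ) : Fin m).val = 2 * y.val - 1 :=
      Fin.val_cast_of_lt (by omega)
    simp only [etau, hv]
    rw [if_neg (by omega), if_pos (by omega),
      show (2 * y.val - 1 + 1) / 2 = y.val by omega, Fin.cast_val_eq_self]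
  · refine ⟨((2 * (y.val - k) : ℕ) : Fin m), ?_⟩
    have hym : y.val < m := y.isLt
    have hv : ((2 * (y.val - k) : ℕ) : Fin m).val = 2 * (y.val - k) :=
      Fin.val_cast_of_lt (by omega)
    simp only [etau, hv]
    rw [if_neg (by omega), if_neg (by omega),
      show 2 * (y.val - k) / 2 + k = y.val by omega, Fin.cast_val_eq_self]

lemma esig_add_etau [NeZero m] {k : ℕ} (hm : m = 2 * k) (hk : 0 < k) (x : Fin m) :
    esig m k x + etau m k x = clps 0 ((k : ℕ) : Fin m) x := by
  by_cases h0 : x.val = 0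
  · have hx : x = 0 := Fin.ext (by rw [Fin.val_zero, h0])
    subst hx
    have e1 : esig m k 0 = ((k : ℕ) : Fin m) := by simp [esig, Fin.val_zero]
    have e2 : etau m k 0 = 0 := by simp [etau, Fin.val_zero]
    rw [e1, e2, add_zero, clps_self]
  · have hx : x ≠ 0 := fun hc => h0 (by rw [hc, Fin.val_zero])
    rw [clps_other hx]
    by_cases hpar : x.val % 2 = 1
    · simp only [esig, etau, if_neg h0, if_pos hpar]
      rw [← Nat.cast_add, show (x.val - 1) / 2 + (x.val + 1) / 2 = x.val by omega,
        Fin.cast_val_eq_self]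
    · simp only [esig, etau, if_neg h0, if_neg hpar]
      rw [← Nat.cast_add, show x.val / 2 + k + (x.val / 2 + k) = x.val + m by omega,
        Nat.cast_add, Fin.natCast_self, add_zero, Fin.cast_val_eq_self]

/-- tosPart as a usable statement. -/
lemma tos_apply {b : Fin m → A} (hb : b ∈ tosPart ρ) (π : Equiv.Perm (Fin m)) :
    b ∘ ⇑π ∈ ρ := hb π

/-- Even case of the collapse lemma. -/
lemma collapse_even (hρ : IsGQuord ρ) {k : ℕ} (hm : m = 2 * k) {p q : Fin m} (hpq : p ≠ q)
    {b : Fin m → A} (hb : b ∈ tosPart ρ) : b ∘ clps p q ∈ ρ := by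
  haveI : NeZero m := ⟨(Fin.pos p).ne'⟩
  have hm1 : m ≠ 1 := fun hc => hpq (by subst hc; exact Subsingleton.elim p q)
  have hk : 0 < k := by omega
  have hkm : k < m := by omega
  set t : Fin m := ((k : ℕ) : Fin m) with hht
  have htval : t.val = k := Fin.val_cast_of_lt hkm
  have ht0 : (0 : Fin m) ≠ t := by
    intro hc
    have := congrArg Fin.val hc
    rw [Fin.val_zero, htval] at this
    omega
  obtain ⟨π, hπ0, hπt⟩ := exists_perm₂ ht0 hpq
  have hσ : Bijective (esig m k) := Finite.surjective_iff_bijective.mp (esig_surj hm)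
  have hτ : Bijective (etau m k) := Finite.surjective_iff_bijective.mp (etau_surj hm)
  set σE := Equiv.ofBijective _ hσ with hσE
  set τE := Equiv.ofBijective _ hτ with hτE
  set M : Fin m → Fin m → A :=
    fun i j => b (π (esig m k (π.symm i) + etau m k (π.symm j))) with hM
  have rows : ∀ i, (fun j => M i j) ∈ ρ := by
    intro i
    have heq : (fun j => M i j)
        = b ∘ ⇑((π.symm.trans τE).trans ((Equiv.addLeft (esig m k (π.symm i))).trans π)) := by
      funext j
      simp [hM, hσE, hτE, Equiv.trans_apply, Equiv.coe_addLeft, Equiv.ofBijective,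
        Function.comp]
    rw [heq]; exact hb _
  have cols : ∀ j, (fun i => M i j) ∈ ρ := by
    intro j
    have heq : (fun i => M i j)
        = b ∘ ⇑((π.symm.trans σE).trans ((Equiv.addRight (etau m k (π.symm j))).trans π)) := by
      funext i
      simp [hM, hσE, hτE, Equiv.trans_apply, Equiv.coe_addRight, Equiv.ofBijective,
        Function.comp]
    rw [heq]; exact hb _
  have hdiag := hρ.2 M rows cols
  have heq : (fun i => M i i) = b ∘ clps p q := by
    funext i
    show b (π (esig m k (π.symm i) + etau m k (π.symm i))) = b (clps p q i)
    rw [esig_add_etau hm hk]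
    by_cases h0 : π.symm i = 0
    · have hi : i = p := by rw [← hπ0, ← h0, Equiv.apply_symm_apply]
      rw [h0, clps_self, hπt, hi, clps_self]
    · have hip : i ≠ p := by
        intro hc
        exact h0 (by rw [hc, ← hπ0, Equiv.symm_apply_apply])
      rw [clps_other h0, Equiv.apply_symm_apply, clps_other hip]
  rw [← heq]; exact hdiag

/-! ### Odd case -/

/-- In the odd case, tuples of the form `b ∘ g` where `g` maps two points `x, y` to a third
point `v` and is the identity elsewhere belong to `ρ`. -/
lemma gshape (hρ : IsGQuord ρ) (hodd : m % 2 = 1) {b : Fin m → A} (hb : b ∈ tosPart ρ)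
    {x y v : Fin m} (hxy : x ≠ y) (hxv : x ≠ v) (hyv : y ≠ v) :
    (fun i => if i = x then b v else if i = y then b v else b i) ∈ ρ := by
  haveI : NeZero m := ⟨(Fin.pos x).ne'⟩
  have hm3 : 3 ≤ m := by
    have h1 : x.val ≠ y.val := fun hc => hxy (Fin.ext hc)
    have h2 : x.val ≠ v.val := fun hc => hxv (Fin.ext hc)
    have h3 : y.val ≠ v.val := fun hc => hyv (Fin.ext hc)
    have := x.isLt; have := y.isLt; have := v.isLt
    omega
  set hh : Fin m := (((m + 1) / 2 : ℕ) : Fin m) with hhh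
  have hhval : hh.val = (m + 1) / 2 := Fin.val_cast_of_lt (by omega)
  have hv1 : (1 : Fin m).val = 1 := by
    have : ((1 : ℕ) : Fin m).val = 1 := Fin.val_cast_of_lt (by omega)
    simpa using this
  have h2 : hh + hh = 1 := by
    calc hh + hh = (((m + 1) / 2 + (m + 1) / 2 : ℕ) : Fin m) := by
          rw [Nat.cast_add]
      _ = ((m + 1 : ℕ) : Fin m) := by rw [show (m + 1) / 2 + (m + 1) / 2 = m + 1 by omega]
      _ = 1 := by rw [Nat.cast_add, Fin.natCast_self, Nat.cast_one, zero_add]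
  have h0h : (0 : Fin m) ≠ hh := by
    intro hc
    have := congrArg Fin.val hc
    rw [Fin.val_zero, hhval] at this
    omega
  have h1h : (1 : Fin m) ≠ hh := by
    intro hc
    have := congrArg Fin.val hc
    rw [hv1, hhval] at this
    omega
  have h01 : (0 : Fin m) ≠ 1 := by
    intro hc
    have := congrArg Fin.val hc
    rw [Fin.val_zero, hv1] at this
    omega
  obtain ⟨π, hπ0, hπ1, hπh⟩ := exists_perm₃ h01 h0h h1h hxy hxv hyv
  have hmul : Bijective (fun z : Fin m => hh * z) := by
    rw [← Finite.injective_iff_bijective]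
    intro u w huw
    simp only at huw
    calc u = (hh + hh) * u := by rw [h2, one_mul]
      _ = hh * u + hh * u := by ring
      _ = hh * w + hh * w := by rw [huw]
      _ = (hh + hh) * w := by ring
      _ = w := by rw [h2, one_mul]
  set μ := Equiv.ofBijective _ hmul with hμ
  set s : Equiv.Perm (Fin m) := Equiv.swap 0 1 with hs
  set M : Fin m → Fin m → A :=
    fun i j => b (π (hh * (s (π.symm i) + π.symm j))) with hM
  have rows : ∀ i, (fun j => M i j) ∈ ρ := by
    intro i
    have heq : (fun j => M i j)
        = b ∘ ⇑((π.symm.trans (Equiv.addLeft (s (π.symm i)))).trans (μ.trans π)) := by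
      funext j
      simp [hM, hμ, Equiv.trans_apply, Equiv.coe_addLeft, Equiv.ofBijective, Function.comp]
    rw [heq]; exact hb _
  have cols : ∀ j, (fun i => M i j) ∈ ρ := by
    intro j
    have heq : (fun i => M i j)
        = b ∘ ⇑(((π.symm.trans s).trans (Equiv.addRight (π.symm j))).trans (μ.trans π)) := by
      funext i
      simp [hM, hμ, hs, Equiv.trans_apply, Equiv.coe_addRight, Equiv.ofBijective,
        Function.comp]
    rw [heq]; exact hb _
  have hdiag := hρ.2 M rows cols
  have heq : (fun i => M i i)
      = fun i => if i = x then b v else if i = y then b v else b i := by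
    funext i
    show b (π (hh * (s (π.symm i) + π.symm i))) = _
    by_cases hk0 : π.symm i = 0
    · have hi : i = x := by rw [← hπ0, ← hk0, Equiv.apply_symm_apply]
      rw [hk0, hs]
      rw [Equiv.swap_apply_left, add_zero, mul_one, hπh, if_pos hi]
    · by_cases hk1 : π.symm i = 1
      · have hi : i = y := by rw [← hπ1, ← hk1, Equiv.apply_symm_apply]
        have hixy : i ≠ x := by rw [hi]; exact fun hc => hxy hc.symm
        rw [hk1, hs]
        rw [Equiv.swap_apply_right, zero_add, mul_one, hπh, if_neg hixy, if_pos hi]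
      · have hsk : s (π.symm i) = π.symm i := by
          rw [hs]; exact Equiv.swap_apply_of_ne_of_ne hk0 hk1
        have hmulk : hh * (π.symm i + π.symm i) = π.symm i := by
          calc hh * (π.symm i + π.symm i) = (hh + hh) * π.symm i := by ring
            _ = π.symm i := by rw [h2, one_mul]
        have hix : i ≠ x := by
          intro hc; exact hk0 (by rw [hc, ← hπ0, Equiv.symm_apply_apply])
        have hiy : i ≠ y := by
          intro hc; exact hk1 (by rw [hc, ← hπ1, Equiv.symm_apply_apply])
        rw [hsk, hmulk, Equiv.apply_symm_apply, if_neg hix, if_neg hiy]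
  rw [← heq]; exact hdiag

/-- Odd case of the collapse lemma. -/
lemma collapse_odd (hρ : IsGQuord ρ) (hodd : m % 2 = 1) {p q : Fin m} (hpq : p ≠ q)
    {b : Fin m → A} (hb : b ∈ tosPart ρ) : b ∘ clps p q ∈ ρ := by
  haveI : NeZero m := ⟨(Fin.pos p).ne'⟩
  have hm1 : m ≠ 1 := fun hc => hpq (by subst hc; exact Subsingleton.elim p q)
  have hm3 : 3 ≤ m := by omega
  have hw : ∃ w : Fin m, w ≠ p ∧ w ≠ q := by
    by_contra hc
    push_neg at hc
    have hsub : (Finset.univ : Finset (Fin m)) ⊆ {p, q} := by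
      intro w _
      by_cases hwp : w = p
      · simp [hwp]
      · simp [hc w hwp]
    have hcard := Finset.card_le_card hsub
    have h2 : ({p, q} : Finset (Fin m)).card ≤ 2 := by
      apply le_trans (Finset.card_insert_le _ _)
      simp
    rw [Finset.card_univ, Fintype.card_fin] at hcard
    omega
  obtain ⟨w, hwp, hwq⟩ := hw
  set β : Equiv.Perm (Fin m) := Equiv.swap p q with hβ
  set α : Equiv.Perm (Fin m) := (Equiv.swap q w).trans β with hα
  have hαp : α p = q := by
    rw [hα, hβ]
    simp only [Equiv.trans_apply]
    rw [Equiv.swap_apply_of_ne_of_ne hpq (Ne.symm hwp), Equiv.swap_apply_left]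
  have hαq : α q = w := by
    rw [hα, hβ]
    simp only [Equiv.trans_apply]
    rw [Equiv.swap_apply_left, Equiv.swap_apply_of_ne_of_ne hwp hwq]
  have hαw : α w = p := by
    rw [hα, hβ]
    simp only [Equiv.trans_apply]
    rw [Equiv.swap_apply_right, Equiv.swap_apply_right]
  have hαj : ∀ j, j ≠ p → j ≠ q → j ≠ w → α j = j := by
    intro j h1 h2 h3
    rw [hα, hβ]
    simp only [Equiv.trans_apply]
    rw [Equiv.swap_apply_of_ne_of_ne h2 h3, Equiv.swap_apply_of_ne_of_ne h1 h2]
  have hβp : β p = q := by rw [hβ]; exact Equiv.swap_apply_left p q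
  have hβq : β q = p := by rw [hβ]; exact Equiv.swap_apply_right p q
  have hβw : β w = w := by rw [hβ]; exact Equiv.swap_apply_of_ne_of_ne hwp hwq
  have hβj : ∀ j, j ≠ p → j ≠ q → β j = j := fun j h1 h2 => by
    rw [hβ]; exact Equiv.swap_apply_of_ne_of_ne h1 h2
  set M : Fin m → Fin m → A :=
    fun i j => if i = p then b (α j) else if i = w then b (β j) else b i with hM
  have rows : ∀ i, (fun j => M i j) ∈ ρ := by
    intro i
    by_cases hip : i = p
    · have heq : (fun j => M i j) = b ∘ ⇑α := by
        funext j; simp [hM, hip]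
      rw [heq]; exact hb _
    · by_cases hiw : i = w
      · have heq : (fun j => M i j) = b ∘ ⇑β := by
          funext j; simp [hM, hip, hiw, hwp]
        rw [heq]; exact hb _
      · have heq : (fun j => M i j) = fun _ => b i := by
          funext j; simp [hM, hip, hiw, hwp]
        rw [heq]; exact hρ.1 (b i)
  have cols : ∀ j, (fun i => M i j) ∈ ρ := by
    intro j
    by_cases hjp : j = p
    · have heq : (fun i => M i j)
          = fun i => if i = p then b q else if i = w then b q else b i := by
        funext i; simp only [hM, hjp, hαp, hβp]
      rw [heq]
      exact gshape hρ hodd hb hwp.symm hpq hwq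
    · by_cases hjq : j = q
      · have heq : (fun i => M i j) = b ∘ ⇑(Equiv.swap p w) := by
          funext i
          simp only [hM, hjq, hαq, hβq, Function.comp_apply]
          by_cases hip : i = p
          · rw [if_pos hip, hip, Equiv.swap_apply_left]
          · by_cases hiw : i = w
            · rw [if_neg hip, if_pos hiw, hiw, Equiv.swap_apply_right]
            · rw [if_neg hip, if_neg hiw, Equiv.swap_apply_of_ne_of_ne hip hiw]
        rw [heq]; exact hb _
      · by_cases hjw : j = w
        · have heq : (fun i => M i j) = b ∘ ⇑(Equiv.refl (Fin m)) := by
            funext i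
            simp only [hM, hjw, hαw, hβw, Function.comp_apply, Equiv.refl_apply]
            by_cases hip : i = p
            · rw [if_pos hip, hip]
            · by_cases hiw : i = w
              · rw [if_neg hip, if_pos hiw, hiw]
              · rw [if_neg hip, if_neg hiw]
          rw [heq]; exact hb _
        · have heq : (fun i => M i j)
              = fun i => if i = p then b j else if i = w then b j else b i := by
            funext i
            simp only [hM, hαj j hjp hjq hjw, hβj j hjp hjq]
          rw [heq]
          exact gshape hρ hodd hb hwp.symm (Ne.symm hjp) (Ne.symm hjw)
  have hdiag := hρ.2 M rows cols
  have heq : (fun i => M i i) = b ∘ clps p q := by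
    funext i
    simp only [hM, Function.comp_apply]
    by_cases hip : i = p
    · rw [if_pos hip, hip, hαp, clps_self]
    · rw [if_neg hip, clps_other hip]
      by_cases hiw : i = w
      · rw [if_pos hiw, hiw, hβw]
      · rw [if_neg hiw]
  rw [← heq]; exact hdiag

/-- The collapse lemma. -/
lemma collapse_mem (hρ : IsGQuord ρ) {p q : Fin m} (hpq : p ≠ q)
    {b : Fin m → A} (hb : b ∈ tosPart ρ) : b ∘ clps p q ∈ ρ := by
  rcases Nat.even_or_odd m with he | ho
  · obtain ⟨k, hk⟩ := he
    exact collapse_even hρ (k := k) (by omega) hpq hb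
  · exact collapse_odd hρ (Nat.odd_iff.mp ho) hpq hb

/-- Main composition lemma: for `b` in the totally symmetric part and arbitrary `f`,
`b ∘ f ∈ ρ`. -/
lemma comp_mem (hρ : IsGQuord ρ) :
    ∀ (c : ℕ) (f : Fin m → Fin m), m - (Finset.univ.image f).card ≤ c →
      ∀ b : Fin m → A, b ∈ tosPart ρ → b ∘ f ∈ ρ := by
  have bijcase : ∀ (f : Fin m → Fin m), Bijective f →
      ∀ b : Fin m → A, b ∈ tosPart ρ → b ∘ f ∈ ρ := by
    intro f hbij b hb
    have : ⇑(Equiv.ofBijective f hbij) = f := rfl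
    have h := hb (Equiv.ofBijective f hbij)
    rwa [this] at h
  intro c
  induction c with
  | zero =>
    intro f hf b hb
    have hle : (Finset.univ.image f).card ≤ m := by
      have := Finset.card_le_univ (Finset.univ.image f)
      rwa [Fintype.card_fin] at this
    have hcard : (Finset.univ.image f).card = Fintype.card (Fin m) := by
      rw [Fintype.card_fin]; omega
    have hsurj : Surjective f := by
      intro y
      have hy : y ∈ Finset.univ.image f := by
        rw [Finset.eq_univ_of_card _ hcard]; exact Finset.mem_univ y
      obtain ⟨i, _, hi⟩ := Finset.mem_image.mp hy
      exact ⟨i, hi⟩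
    exact bijcase f (Finite.surjective_iff_bijective.mp hsurj) b hb
  | succ n ih =>
    intro f hf b hb
    by_cases hinj : Injective f
    · exact bijcase f (Finite.injective_iff_bijective.mp hinj) b hb
    · obtain ⟨p, q, hfpq, hpq⟩ := Function.not_injective_iff.mp hinj
      have hnsurj : ¬ Surjective f := fun hc =>
        hinj (Finite.injective_iff_surjective.mpr hc)
      simp only [Function.Surjective] at hnsurj
      push_neg at hnsurj
      obtain ⟨r, hr⟩ := hnsurj
      set f' := Function.update f p r with hf'
      have hcomp : f = f' ∘ clps p q := by
        funext i
        by_cases hip : i = p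
        · rw [hip, Function.comp_apply, clps_self, hf', Function.update_of_ne hpq.symm,
            ← hfpq]
        · rw [Function.comp_apply, clps_other hip, hf', Function.update_of_ne hip]
      have himg : Finset.univ.image f' = insert r (Finset.univ.image f) := by
        ext z
        simp only [Finset.mem_image, Finset.mem_insert, Finset.mem_univ, true_and]
        constructor
        · rintro ⟨i, hi⟩
          by_cases hip : i = p
          · left; rw [← hi, hip, hf', Function.update_self]
          · right; exact ⟨i, by rwa [hf', Function.update_of_ne hip] at hi⟩
        · rintro (rfl | ⟨i, hi⟩)
          · exact ⟨p, by rw [hf', Function.update_self]⟩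
          · by_cases hip : i = p
            · refine ⟨q, ?_⟩
              rw [hf', Function.update_of_ne hpq.symm, ← hfpq, ← hip, hi]
            · exact ⟨i, by rw [hf', Function.update_of_ne hip]; exact hi⟩
      have hrim : r ∉ Finset.univ.image f := by
        simp only [Finset.mem_image, Finset.mem_univ, true_and, not_exists]
        exact hr
      have hcard' : (Finset.univ.image f').card = (Finset.univ.image f).card + 1 := by
        rw [himg, Finset.card_insert_of_notMem hrim]
      have hle : (Finset.univ.image f').card ≤ m := by
        have := Finset.card_le_univ (Finset.univ.image f')
        rwa [Fintype.card_fin] at this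
      have hb' : (b ∘ f') ∈ tosPart ρ := by
        intro π'
        have himgπ : Finset.univ.image (f' ∘ ⇑π') = Finset.univ.image f' := by
          rw [← Finset.image_image, Finset.image_univ_equiv]
        have := ih (f' ∘ ⇑π') (by rw [himgπ]; omega) b hb
        rwa [← Function.comp_assoc] at this
      have hkey := collapse_mem hρ hpq hb'
      rw [hcomp, ← Function.comp_assoc]
      exact hkey

end GQAux

theorem absPart_gEquiv {A : Type*} {m : ℕ} (ρ : Set (Fin m → A))
    (h : IsGQuord ρ) : IsGEquiv (absPart ρ) ∧ absPart ρ = tosPart ρ := by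
  classical
  constructor
  · refine ⟨⟨?_, ?_⟩, ?_⟩
    · -- reflexivity of absPart
      intro a t ht
      have heq : t = fun _ => a := by
        funext i
        obtain ⟨j, hj⟩ := ht i
        exact hj
      rw [heq]
      exact h.1 a
    · -- generalized transitivity of absPart
      intro M hrows hcols t ht
      choose g hg using ht
      have rows' : ∀ k, (fun l => M (g k) (g l)) ∈ ρ := fun k =>
        hrows (g k) (fun l => M (g k) (g l)) (fun l => ⟨g l, rfl⟩)
      have cols' : ∀ l, (fun k => M (g k) (g l)) ∈ ρ := fun l =>
        hcols (g l) (fun k => M (g k) (g l)) (fun k => ⟨g k, rfl⟩)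
      have hd := h.2 (fun k l => M (g k) (g l)) rows' cols'
      have heq : (fun k => M (g k) (g k)) = t := by
        funext k
        exact (hg k).symm
      rwa [heq] at hd
    · -- total symmetry of absPart
      intro a ha π t ht
      apply ha
      intro i
      obtain ⟨j, hj⟩ := ht i
      exact ⟨π j, hj⟩
  · ext a
    constructor
    · intro ha π
      exact ha (a ∘ ⇑π) (fun i => ⟨π i, rfl⟩)
    · intro ha t ht
      choose g hg using ht
      have heq : t = a ∘ g := funext hg
      rw [heq]
      exact GQAux.comp_mem h m g (by omega) a ha
end

section
/- Let θ ⊆ A^m (m ≥ 2) be a generalized equivalence relation and (a₁,…,a_m) ∈ θ. Then for any indices i, j ∈ {1,…,m}, every tuple in {a_i, a_j}^m belongs to θ. -/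
-- bijectivity of punctured maps
lemma punctured_bij {n : ℕ} (k₀ i : Fin (n+1))
    (ι : Fin n ≃ {x : Fin (n+1) // x ≠ k₀}) (κ : Fin n ≃ {x : Fin (n+1) // x ≠ i})
    (u : Equiv.Perm (Fin n)) :
    Function.Bijective (fun x : Fin (n+1) =>
      if h : x = k₀ then i else (κ (u (ι.symm ⟨x, h⟩)) : Fin (n+1))) := by
  constructor
  · intro x₁ x₂ hx
    dsimp only at hx
    by_cases h1 : x₁ = k₀ <;> by_cases h2 : x₂ = k₀
    · rw [h1, h2]
    · rw [dif_pos h1, dif_neg h2] at hx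
      exact absurd hx.symm (κ _).2
    · rw [dif_neg h1, dif_pos h2] at hx
      exact absurd hx (κ _).2
    · rw [dif_neg h1, dif_neg h2] at hx
      have := Subtype.coe_injective hx
      have := κ.injective this
      have := u.injective this
      have := ι.symm.injective this
      exact congrArg Subtype.val this
  · intro y
    dsimp only
    by_cases hy : y = i
    · exact ⟨k₀, by rw [dif_pos rfl, hy]⟩
    · refine ⟨(ι (u.symm (κ.symm ⟨y, hy⟩)) : Fin (n+1)), ?_⟩
      rw [dif_neg (ι (u.symm (κ.symm ⟨y, hy⟩))).2]
      rw [Subtype.coe_eta, Equiv.symm_apply_apply, Equiv.apply_symm_apply,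
        Equiv.apply_symm_apply]

lemma gequiv_single {A : Type*} {m : ℕ} (hm : 2 ≤ m)
    (θ : Set (Fin m → A)) (h : IsGEquiv θ) (a : Fin m → A) (ha : a ∈ θ)
    (i j k₀ : Fin m) (hij : i ≠ j) :
    (fun k => if k = k₀ then a i else a j) ∈ θ := by
  obtain ⟨⟨hconst, htrans⟩, hsym⟩ := h
  obtain ⟨n, rfl⟩ : ∃ n, m = n + 1 := ⟨m - 1, by omega⟩
  haveI : NeZero n := ⟨by omega⟩
  set ι : Fin n ≃ {x : Fin (n+1) // x ≠ k₀} := finSuccAboveEquiv k₀ with hι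
  set κ : Fin n ≃ {x : Fin (n+1) // x ≠ i} := finSuccAboveEquiv i with hκ
  set z : Fin n := κ.symm ⟨j, Ne.symm hij⟩ with hz
  set g : Fin (n+1) → Fin (n+1) → Fin (n+1) := fun k p =>
    if hk : k = k₀ then i else if hp : p = k₀ then i
    else (κ (ι.symm ⟨k, hk⟩ - ι.symm ⟨p, hp⟩ + z) : Fin (n+1)) with hg
  have key := htrans (fun k p => a (g k p)) ?_ ?_
  · have hdiag : (fun k => if k = k₀ then a i else a j) = fun k => a (g k k) := by
      funext k
      by_cases hk : k = k₀
      · rw [if_pos hk]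
        have : g k k = i := by rw [hg]; dsimp only; rw [dif_pos hk]
        rw [this]
      · rw [if_neg hk]
        have : g k k = j := by
          rw [hg]; dsimp only
          rw [dif_neg hk, dif_neg hk, sub_self, zero_add, hz, Equiv.apply_symm_apply]
        rw [this]
    rw [hdiag]; exact key
  · -- rows
    intro k
    by_cases hk : k = k₀
    · have : (fun p => a (g k p)) = fun _ => a i := by
        funext p; rw [hg]; dsimp only; rw [dif_pos hk]
      rw [this]; exact hconst (a i)
    · set u : Equiv.Perm (Fin n) :=
        (Equiv.subLeft (ι.symm ⟨k, hk⟩)).trans (Equiv.addRight z) with hu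
      have hb := punctured_bij k₀ i ι κ u
      have : (fun p => a (g k p)) = a ∘ (Equiv.ofBijective _ hb) := by
        funext p
        show a (g k p) = a (Equiv.ofBijective _ hb p)
        congr 1
        rw [Equiv.ofBijective_apply, hg]; dsimp only
        rw [dif_neg hk]
        by_cases hp : p = k₀
        · rw [dif_pos hp, dif_pos hp]
        · rw [dif_neg hp, dif_neg hp]
          rfl
      rw [this]; exact hsym a ha _
  · -- columns
    intro p
    by_cases hp : p = k₀
    · have : (fun k => a (g k p)) = fun _ => a i := by
        funext k; rw [hg]; dsimp only
        by_cases hk : k = k₀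
        · rw [dif_pos hk]
        · rw [dif_neg hk, dif_pos hp]
      rw [this]; exact hconst (a i)
    · set u : Equiv.Perm (Fin n) :=
        (Equiv.subRight (ι.symm ⟨p, hp⟩)).trans (Equiv.addRight z) with hu
      have hb := punctured_bij k₀ i ι κ u
      have : (fun k => a (g k p)) = a ∘ (Equiv.ofBijective _ hb) := by
        funext k
        show a (g k p) = a (Equiv.ofBijective _ hb k)
        congr 1
        rw [Equiv.ofBijective_apply, hg]; dsimp only
        by_cases hk : k = k₀
        · rw [dif_pos hk, dif_pos hk]
        · rw [dif_neg hk, dif_neg hk, dif_neg hp]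
          rfl
      rw [this]; exact hsym a ha _

lemma gequiv_step {A : Type*} {m : ℕ} (θ : Set (Fin m → A)) (h : IsGEquiv θ)
    (ai aj : A) (S : Finset (Fin m)) (hS : 2 ≤ S.card)
    (IH : ∀ S' : Finset (Fin m), S'.card + 1 = S.card →
      (fun k => if k ∈ S' then ai else aj) ∈ θ) :
    (fun k => if k ∈ S then ai else aj) ∈ θ := by
  obtain ⟨⟨hconst, htrans⟩, hsym⟩ := h
  obtain ⟨c, hc⟩ : ∃ c, S.card = c + 2 := ⟨S.card - 2, by omega⟩
  let e : S ≃ Fin (c + 2) := Finset.equivFinOfCardEq hc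
  classical
  set x : Fin m → Fin m := fun k =>
    if hk : k ∈ S then (e.symm (e ⟨k, hk⟩ + 1) : Fin m) else k with hxdef
  have hxS : ∀ k, k ∈ S → x k ∈ S := by
    intro k hk; rw [hxdef]; dsimp only; rw [dif_pos hk]; exact (e.symm _).2
  have hxne : ∀ k, k ∈ S → x k ≠ k := by
    intro k hk hcon
    rw [hxdef] at hcon; dsimp only at hcon; rw [dif_pos hk] at hcon
    have h1 : e.symm (e ⟨k, hk⟩ + 1) = ⟨k, hk⟩ := Subtype.ext hcon
    have h2 := congrArg e h1
    rw [Equiv.apply_symm_apply] at h2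
    have : (1 : Fin (c+2)) = 0 := by
      have h3 : e ⟨k, hk⟩ + 1 = e ⟨k, hk⟩ + 0 := by rw [add_zero]; exact h2
      exact add_left_cancel h3
    simp at this
  have hxiff : ∀ p (hp : p ∈ S) k (hk : k ∈ S),
      (x k = p ↔ k = (e.symm (e ⟨p, hp⟩ - 1) : Fin m)) := by
    intro p hp k hk
    rw [hxdef]; dsimp only; rw [dif_pos hk]
    constructor
    · intro hcon
      have h1 : e.symm (e ⟨k, hk⟩ + 1) = ⟨p, hp⟩ := Subtype.ext hcon
      have h2 := congrArg e h1
      rw [Equiv.apply_symm_apply] at h2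
      have h3 : e ⟨k, hk⟩ = e ⟨p, hp⟩ - 1 := by rw [← h2]; exact (add_sub_cancel_right _ _).symm
      have h4 := congrArg e.symm h3
      rw [Equiv.symm_apply_apply] at h4
      exact congrArg Subtype.val h4
    · intro hcon
      have h1 : (⟨k, hk⟩ : S) = e.symm (e ⟨p, hp⟩ - 1) := Subtype.ext hcon
      rw [h1, Equiv.apply_symm_apply, sub_add_cancel, Equiv.symm_apply_apply]
  have key := htrans (fun k p => if k ∈ S ∧ p ∈ S ∧ p ≠ x k then ai else aj) ?_ ?_
  · have hdiag : (fun k => if k ∈ S then ai else aj)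
        = fun k => if k ∈ S ∧ k ∈ S ∧ k ≠ x k then ai else aj := by
      funext k
      by_cases hk : k ∈ S
      · rw [if_pos hk, if_pos ⟨hk, hk, Ne.symm (hxne k hk)⟩]
      · rw [if_neg hk, if_neg (by tauto)]
    rw [hdiag]; exact key
  · -- rows
    intro k
    by_cases hk : k ∈ S
    · have hrow : (fun p => if k ∈ S ∧ p ∈ S ∧ p ≠ x k then ai else aj)
          = fun p => if p ∈ S.erase (x k) then ai else aj := by
        funext p
        by_cases hp : p ∈ S.erase (x k)
        · rw [if_pos hp, if_pos]
          rw [Finset.mem_erase] at hp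
          exact ⟨hk, hp.2, hp.1⟩
        · rw [if_neg hp, if_neg]
          rw [Finset.mem_erase] at hp
          tauto
      rw [hrow]
      exact IH _ (by rw [Finset.card_erase_of_mem (hxS k hk)]; omega)
    · have : (fun p => if k ∈ S ∧ p ∈ S ∧ p ≠ x k then ai else aj) = fun _ => aj := by
        funext p; rw [if_neg (by tauto)]
      rw [this]; exact hconst aj
  · -- columns
    intro p
    by_cases hp : p ∈ S
    · set yp : Fin m := (e.symm (e ⟨p, hp⟩ - 1) : Fin m) with hyp
      have hypS : yp ∈ S := (e.symm _).2
      have hcol : (fun k => if k ∈ S ∧ p ∈ S ∧ p ≠ x k then ai else aj)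
          = fun k => if k ∈ S.erase yp then ai else aj := by
        funext k
        by_cases hk : k ∈ S
        · by_cases hke : k = yp
          · rw [if_neg, if_neg]
            · rw [Finset.mem_erase]; tauto
            · rintro ⟨-, -, hne⟩
              exact hne (((hxiff p hp k hk).mpr hke).symm)
          · rw [if_pos, if_pos]
            · rw [Finset.mem_erase]; exact ⟨hke, hk⟩
            · refine ⟨hk, hp, fun hcon => hke ((hxiff p hp k hk).mp hcon.symm)⟩
        · rw [if_neg (by tauto), if_neg (by rw [Finset.mem_erase]; tauto)]
      rw [hcol]
      exact IH _ (by rw [Finset.card_erase_of_mem hypS]; omega)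
    · have : (fun k => if k ∈ S ∧ p ∈ S ∧ p ≠ x k then ai else aj) = fun _ => aj := by
        funext k; rw [if_neg (by tauto)]
      rw [this]; exact hconst aj

theorem gEquiv_two_element_cube {A : Type*} {m : ℕ} (hm : 2 ≤ m)
    (θ : Set (Fin m → A)) (h : IsGEquiv θ) (a : Fin m → A) (ha : a ∈ θ)
    (i j : Fin m) :
    ∀ t : Fin m → A, (∀ k, t k = a i ∨ t k = a j) → t ∈ θ := by
  intro t ht
  classical
  by_cases hval : a i = a j
  · have : t = fun _ => a j := by
      funext k
      rcases ht k with h' | h'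
      · rw [h', hval]
      · rw [h']
    rw [this]; exact h.1.1 (a j)
  · have hij : i ≠ j := fun he => hval (by rw [he])
    have main : ∀ (n : ℕ) (S : Finset (Fin m)), S.card = n →
        (fun k => if k ∈ S then a i else a j) ∈ θ := by
      intro n
      induction n with
      | zero =>
        intro S hS
        obtain rfl := Finset.card_eq_zero.mp hS
        have : (fun k : Fin m => if k ∈ (∅ : Finset (Fin m)) then a i else a j)
            = fun _ => a j := by
          funext k; rw [if_neg (Finset.notMem_empty k)]
        rw [this]; exact h.1.1 (a j)
      | succ n ihn =>
        intro S hS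
        by_cases hn : n = 0
        · subst hn
          obtain ⟨k₀, rfl⟩ := Finset.card_eq_one.mp hS
          have : (fun k : Fin m => if k ∈ ({k₀} : Finset (Fin m)) then a i else a j)
              = fun k => if k = k₀ then a i else a j := by
            funext k
            simp only [Finset.mem_singleton]
          rw [this]
          exact gequiv_single hm θ h a ha i j k₀ hij
        · exact gequiv_step θ h (a i) (a j) S (by omega)
            (fun S' hS' => ihn S' (by omega))
    have hfin := main _ (Finset.univ.filter (fun k => t k = a i)) rfl
    have : t = fun k => if k ∈ Finset.univ.filter (fun k => t k = a i) then a i else a j := by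
      funext k
      by_cases hk : t k = a i
      · rw [if_pos (by simp [hk]), hk]
      · rcases ht k with h' | h'
        · exact absurd h' hk
        · rw [if_neg (by simp [hk]), h']
    rw [this]; exact hfin
end

section
/- For m ≥ 2, the maps ψ ↦ ψ^{↕m} := {(a₁,…,a_m) : (a_i,a_j) ∈ ψ for all i,j} and θ ↦ θ^[2] := {(a,b) : {a,b}^m ⊆ θ} are mutually inverse lattice isomorphisms between the lattice of equivalence relations on A and the lattice of m-ary generalized equivalence relations on A. -/
/-- The binary symmetric part of an m-ary relation. -/
def binSym {A : Type*} {m : ℕ} (ρ : Set (Fin m → A)) (a b : A) : Prop :=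
  ∀ t : Fin m → A, (∀ i, t i = a ∨ t i = b) → t ∈ ρ

/-- The m-ary generalized equivalence associated with a binary relation. -/
def upM {A : Type*} (m : ℕ) (ψ : A → A → Prop) : Set (Fin m → A) :=
  {a | ∀ i j, ψ (a i) (a j)}

section GEquivAux

variable {A : Type*} {m : ℕ}

private lemma finSuccEquiv'_zero_ne {n : ℕ} (l : Fin (n + 1)) (hl : l ≠ 0) :
    finSuccEquiv' (0 : Fin (n + 1)) l = some (l.pred hl) := by
  have := finSuccEquiv'_succAbove (0 : Fin (n + 1)) (l.pred hl)
  rwa [Fin.zero_succAbove, Fin.succ_pred] at this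

private lemma two_val_swap (x y : A) (p₀ k : Fin m) :
    (fun k' => if k' = p₀ then x else y) ∘ (Equiv.swap p₀ k) =
      fun l => if l = k then x else y := by
  classical
  funext l
  simp only [Function.comp_apply]
  by_cases hl : l = k
  · subst hl
    rw [Equiv.swap_apply_right, if_pos rfl, if_pos rfl]
  · by_cases hlp : l = p₀
    · subst hlp
      rw [Equiv.swap_apply_left, if_neg (Ne.symm hl), if_neg hl]
    · rw [Equiv.swap_apply_of_ne_of_ne hlp hl, if_neg hlp, if_neg hl]

/-- Pair lemma: if the tuple with a single `x` (at position `p₀`) among `y`'s is in `θ`,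
then `binSym θ x y`. -/
private lemma gEquiv_pair {θ : Set (Fin m → A)} (hθ : IsGEquiv θ) {x y : A} (p₀ : Fin m)
    (hu : (fun k => if k = p₀ then x else y) ∈ θ) : binSym θ x y := by
  classical
  intro t ht
  have key : ∀ k : Fin m, (fun l => if l = k then t k else y) ∈ θ := by
    intro k
    rcases ht k with hk | hk
    · have he : (fun l => if l = k then t k else y)
          = (fun k' => if k' = p₀ then x else y) ∘ (Equiv.swap p₀ k) := by
        rw [two_val_swap]
        funext l
        rw [hk]
      exact Set.mem_of_eq_of_mem he (hθ.2 _ hu _)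
    · have he : (fun l => if l = k then t k else y) = fun _ => y := by
        funext l
        split
        · exact hk
        · rfl
      exact Set.mem_of_eq_of_mem he (hθ.1.1 y)
  have cols : ∀ l : Fin m, (fun k => if l = k then t k else y) ∈ θ := by
    intro l
    have he : (fun k => if l = k then t k else y) = fun q => if q = l then t l else y := by
      funext q
      by_cases hq : q = l
      · subst hq; simp
      · rw [if_neg (Ne.symm hq), if_neg hq]
    exact Set.mem_of_eq_of_mem he (key l)
  have hd := hθ.1.2 (fun k l => if l = k then t k else y) key cols
  have he : t = fun k => if k = k then t k else y := by
    funext q; simp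
  exact Set.mem_of_eq_of_mem he hd

private lemma binSym_equivalence {θ : Set (Fin m → A)} (hθ : IsGEquiv θ) :
    Equivalence (binSym θ) := by
  classical
  constructor
  · intro a t ht
    have he : t = fun _ => a := funext fun i => by rcases ht i with h | h <;> exact h
    exact Set.mem_of_eq_of_mem he (hθ.1.1 a)
  · intro a b h t ht
    exact h t fun i => (ht i).symm
  · intro a b c hab hbc t ht
    have rows : ∀ i, (fun j => if t i = a then (if t j = a then a else b)
        else (if t j = a then b else c)) ∈ θ := by
      intro i
      by_cases hi : t i = a
      · refine hab _ fun j => ?_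
        rw [if_pos hi]
        split
        · exact Or.inl rfl
        · exact Or.inr rfl
      · refine hbc _ fun j => ?_
        rw [if_neg hi]
        split
        · exact Or.inl rfl
        · exact Or.inr rfl
    have cols : ∀ j, (fun i => if t i = a then (if t j = a then a else b)
        else (if t j = a then b else c)) ∈ θ := by
      intro j
      by_cases hj : t j = a
      · refine hab _ fun i => ?_
        rw [if_pos hj]
        split
        · exact Or.inl rfl
        · exact Or.inr rfl
      · refine hbc _ fun i => ?_
        rw [if_neg hj]
        split
        · exact Or.inl rfl
        · exact Or.inr rfl
    have hd := hθ.1.2 _ rows cols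
    have he : t = fun i => if t i = a then (if t i = a then a else b)
        else (if t i = a then b else c) := by
      funext i
      by_cases hi : t i = a
      · rw [if_pos hi, if_pos hi, hi]
      · rw [if_neg hi, if_neg hi]
        rcases ht i with h | h
        · exact absurd h hi
        · exact h
    exact Set.mem_of_eq_of_mem he hd

/-- Key lemma: if `b ∈ θ` then the tuple `(b i, b j, b j, …, b j)` is in `θ`. -/
private lemma gEquiv_single {k : ℕ} {θ : Set (Fin (k + 2) → A)} (hθ : IsGEquiv θ)
    {b : Fin (k + 2) → A} (hb : b ∈ θ) {i j : Fin (k + 2)} (hij : i ≠ j) :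
    (fun p => if p = (0 : Fin (k + 2)) then b i else b j) ∈ θ := by
  classical
  obtain ⟨j', hj'⟩ := Fin.exists_succAbove_eq hij.symm
  -- hj' : i.succAbove j' = j
  have rows : ∀ p : Fin (k + 2), (fun l =>
      if hp : p = (0 : Fin (k + 2)) then b i
      else if hl : l = (0 : Fin (k + 2)) then b i
      else b (i.succAbove (j' + l.pred hl - p.pred hp))) ∈ θ := by
    intro p
    by_cases hp : p = 0
    · have he : (fun l => if hp : p = (0 : Fin (k + 2)) then b i
          else if hl : l = (0 : Fin (k + 2)) then b i
          else b (i.succAbove (j' + l.pred hl - p.pred hp))) = fun _ => b i := by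
        funext l; rw [dif_pos hp]
      exact Set.mem_of_eq_of_mem he (hθ.1.1 (b i))
    · have he : (fun l => if hp : p = (0 : Fin (k + 2)) then b i
          else if hl : l = (0 : Fin (k + 2)) then b i
          else b (i.succAbove (j' + l.pred hl - p.pred hp)))
          = b ∘ ((finSuccEquiv' (0 : Fin (k + 2))).trans
              ((Equiv.optionCongr (Equiv.addLeft (j' - p.pred hp))).trans
                (finSuccEquiv' i).symm)) := by
        funext l
        simp only [Function.comp_apply, Equiv.trans_apply]
        by_cases hl : l = 0
        · subst hl
          rw [dif_neg hp, dif_pos rfl, finSuccEquiv'_at]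
          simp only [Equiv.optionCongr_apply, Option.map_none, finSuccEquiv'_symm_none]
        · rw [dif_neg hp, dif_neg hl, finSuccEquiv'_zero_ne l hl]
          simp only [Equiv.optionCongr_apply, Option.map_some, finSuccEquiv'_symm_some,
            Equiv.coe_addLeft]
          rw [sub_add_eq_add_sub]
      exact Set.mem_of_eq_of_mem he (hθ.2 b hb _)
  have cols : ∀ l : Fin (k + 2), (fun p =>
      if hp : p = (0 : Fin (k + 2)) then b i
      else if hl : l = (0 : Fin (k + 2)) then b i
      else b (i.succAbove (j' + l.pred hl - p.pred hp))) ∈ θ := by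
    intro l
    by_cases hl : l = 0
    · have he : (fun p => if hp : p = (0 : Fin (k + 2)) then b i
          else if hl : l = (0 : Fin (k + 2)) then b i
          else b (i.succAbove (j' + l.pred hl - p.pred hp))) = fun _ => b i := by
        funext p
        by_cases hp : p = 0
        · rw [dif_pos hp]
        · rw [dif_neg hp, dif_pos hl]
      exact Set.mem_of_eq_of_mem he (hθ.1.1 (b i))
    · have he : (fun p => if hp : p = (0 : Fin (k + 2)) then b i
          else if hl : l = (0 : Fin (k + 2)) then b i
          else b (i.succAbove (j' + l.pred hl - p.pred hp)))
          = b ∘ ((finSuccEquiv' (0 : Fin (k + 2))).trans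
              ((Equiv.optionCongr (Equiv.subLeft (j' + l.pred hl))).trans
                (finSuccEquiv' i).symm)) := by
        funext p
        simp only [Function.comp_apply, Equiv.trans_apply]
        by_cases hp : p = 0
        · subst hp
          rw [dif_pos rfl, finSuccEquiv'_at]
          simp only [Equiv.optionCongr_apply, Option.map_none, finSuccEquiv'_symm_none]
        · rw [dif_neg hp, dif_neg hl, finSuccEquiv'_zero_ne p hp]
          simp only [Equiv.optionCongr_apply, Option.map_some, finSuccEquiv'_symm_some,
            Equiv.subLeft_apply]
      exact Set.mem_of_eq_of_mem he (hθ.2 b hb _)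
  have hd := hθ.1.2 _ rows cols
  have he : (fun p => if p = (0 : Fin (k + 2)) then b i else b j)
      = fun p => if hp : p = (0 : Fin (k + 2)) then b i
        else if hl : p = (0 : Fin (k + 2)) then b i
        else b (i.succAbove (j' + p.pred hl - p.pred hp)) := by
    funext p
    by_cases hp : p = 0
    · rw [dif_pos hp, if_pos hp]
    · rw [dif_neg hp, dif_neg hp, if_neg hp, add_sub_cancel_right, hj']
  exact Set.mem_of_eq_of_mem he hd

private lemma gEquiv_binSym_of_mem {k : ℕ} {θ : Set (Fin (k + 2) → A)} (hθ : IsGEquiv θ)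
    {b : Fin (k + 2) → A} (hb : b ∈ θ) (i j : Fin (k + 2)) : binSym θ (b i) (b j) := by
  by_cases h : b i = b j
  · intro t ht
    have he : t = fun _ => b j := by
      funext p
      rcases ht p with hp | hp
      · rw [hp, h]
      · exact hp
    exact Set.mem_of_eq_of_mem he (hθ.1.1 (b j))
  · have hij : i ≠ j := fun e => h (by rw [e])
    exact gEquiv_pair hθ 0 (gEquiv_single hθ hb hij)

private lemma upM_binSym_eq {k : ℕ} {θ : Set (Fin (k + 2) → A)} (hθ : IsGEquiv θ) :
    upM (k + 2) (binSym θ) = θ := by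
  classical
  apply Set.Subset.antisymm
  · intro t ht
    have rows : ∀ p : Fin (k + 2), (fun l => if p = l then t p else t 0) ∈ θ := by
      intro p
      refine ht p 0 _ fun l => ?_
      beta_reduce
      split
      · exact Or.inl rfl
      · exact Or.inr rfl
    have cols : ∀ l : Fin (k + 2), (fun p => if p = l then t p else t 0) ∈ θ := by
      intro l
      refine ht l 0 _ fun p => ?_
      beta_reduce
      split
      · rename_i h; exact Or.inl (by rw [h])
      · exact Or.inr rfl
    have hd := hθ.1.2 _ rows cols
    have he : t = fun p => if p = p then t p else t 0 := by
      funext p; simp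
    exact Set.mem_of_eq_of_mem he hd
  · intro b hb i j
    exact gEquiv_binSym_of_mem hθ hb i j

end GEquivAux
theorem gEquiv_lattice_iso {A : Type*} {m : ℕ} (hm : 2 ≤ m) :
    (∀ ψ : A → A → Prop, Equivalence ψ →
        IsGEquiv (upM m ψ) ∧ binSym (upM m ψ) = ψ) ∧
    (∀ θ : Set (Fin m → A), IsGEquiv θ →
        Equivalence (binSym θ) ∧ upM m (binSym θ) = θ) ∧
    (∀ ψ ψ' : A → A → Prop, Equivalence ψ → Equivalence ψ' →
        ((∀ a b, ψ a b → ψ' a b) ↔ upM m ψ ⊆ upM m ψ')) ∧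
    (∀ θ θ' : Set (Fin m → A), IsGEquiv θ → IsGEquiv θ' →
        (θ ⊆ θ' ↔ ∀ a b, binSym θ a b → binSym θ' a b)) := by
  classical
  obtain ⟨k, rfl⟩ : ∃ k, m = k + 2 := ⟨m - 2, by omega⟩
  have hi01 : (1 : Fin (k + 2)) ≠ 0 := by simp [Fin.ext_iff]
  -- the basic two-valued tuple lies in `upM` when `ψ a b`
  have hbasic : ∀ (ψ : A → A → Prop), Equivalence ψ → ∀ a b : A, ψ a b →
      (fun p : Fin (k + 2) => if p = 0 then a else b) ∈ upM (k + 2) ψ := by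
    intro ψ hψ a b hab p q
    beta_reduce
    by_cases hp : p = 0 <;> by_cases hq : q = 0
    · rw [if_pos hp, if_pos hq]; exact hψ.refl a
    · rw [if_pos hp, if_neg hq]; exact hab
    · rw [if_neg hp, if_pos hq]; exact hψ.symm hab
    · rw [if_neg hp, if_neg hq]; exact hψ.refl b
  have hGE : ∀ (ψ : A → A → Prop), Equivalence ψ → IsGEquiv (upM (k + 2) ψ) := by
    intro ψ hψ
    refine ⟨⟨fun a i j => hψ.refl a, ?_⟩, ?_⟩
    · intro M hrows hcols i j
      exact hψ.trans (hrows i i j) (hcols j i j)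
    · intro a ha π i j
      exact ha (π i) (π j)
  have hbin : ∀ (ψ : A → A → Prop), Equivalence ψ → binSym (upM (k + 2) ψ) = ψ := by
    intro ψ hψ
    funext a b
    apply propext
    constructor
    · intro h
      have ht := h (fun p => if p = 0 then a else b) ?_
      · have h2 := ht 0 1
        beta_reduce at h2
        rwa [if_pos rfl, if_neg hi01] at h2
      · intro p
        beta_reduce
        split
        · exact Or.inl rfl
        · exact Or.inr rfl
    · intro hab t ht p q
      rcases ht p with hp | hp <;> rcases ht q with hq | hq <;> rw [hp, hq]
      · exact hψ.refl a
      · exact hab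
      · exact hψ.symm hab
      · exact hψ.refl b
  refine ⟨fun ψ hψ => ⟨hGE ψ hψ, hbin ψ hψ⟩,
    fun θ hθ => ⟨binSym_equivalence hθ, upM_binSym_eq hθ⟩, ?_, ?_⟩
  · intro ψ ψ' hψ hψ'
    constructor
    · intro h t ht p q
      exact h _ _ (ht p q)
    · intro h a b hab
      have h2 := h (hbasic ψ hψ a b hab) 0 1
      beta_reduce at h2
      rwa [if_pos rfl, if_neg hi01] at h2
  · intro θ θ' hθ hθ'
    constructor
    · intro hsub a b hab t ht
      exact hsub (hab t ht)
    · intro h t ht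
      rw [← upM_binSym_eq hθ']
      intro p q
      exact h _ _ (gEquiv_binSym_of_mem hθ ht p q)
end

section
/- For any generalized quasiorder ρ ⊆ A^m, the exchange equivalence ρ^⟨2⟩ is contained in the binary symmetric part ρ^[2]. -/
/-- a and b are exchangeable with respect to ρ: replacing a by b at any single
coordinate of any tuple preserves membership in ρ. -/
def Exch {A : Type*} {m : ℕ} (ρ : Set (Fin m → A)) (a b : A) : Prop :=
  ∀ (i : Fin m) (t : Fin m → A),
    Function.update t i a ∈ ρ ↔ Function.update t i b ∈ ρ

/-- A binary relation ψ has the exchange property w.r.t. ρ. -/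
def ExchProp {A : Type*} {m : ℕ} (ψ : A → A → Prop) (ρ : Set (Fin m → A)) : Prop :=
  ∀ a b : Fin m → A, a ∈ ρ → (∀ i, ψ (a i) (b i)) → b ∈ ρ

theorem exch_subset_binSym {A : Type*} {m : ℕ} (ρ : Set (Fin m → A))
    (h : IsGQuord ρ) (a b : A) (hab : Exch ρ a b) :
    ∀ t : Fin m → A, (∀ i, t i = a ∨ t i = b) → t ∈ ρ := by
  classical
  have key : ∀ s : Finset (Fin m), (fun i => if i ∈ s then b else a) ∈ ρ := by
    intro s
    induction s using Finset.induction with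
    | empty => simpa using h.1 a
    | @insert j s hj ih =>
        have h1 : (fun i => if i ∈ s then b else a)
            = Function.update (fun i => if i ∈ s then b else a) j a := by
          funext i
          by_cases hij : i = j
          · subst hij; simp [hj]
          · simp [Function.update, hij]
        have h2 : (fun i => if i ∈ insert j s then b else a)
            = Function.update (fun i => if i ∈ s then b else a) j b := by
          funext i
          by_cases hij : i = j
          · subst hij; simp
          · simp [Function.update, hij, Finset.mem_insert]
        rw [h2]
        rw [← hab j]
        rwa [← h1]
  intro t ht
  have : t = fun i => if i ∈ Finset.univ.filter (fun i => t i = b) then b else a := by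
    funext i
    rcases ht i with h1 | h1 <;> by_cases h2 : t i = b <;> simp [h1, h2] <;> grind
  rw [this]; exact key _
end

section
/- Let ρ ⊆ A^m be a generalized quasiorder and ψ an equivalence relation on A. Then ψ ⊆ ρ^[2] if and only if the block factor relation ρ/[ψ] := {(B₁,…,B_m) ∈ (A/ψ)^m : B₁×…×B_m ⊆ ρ} is a generalized quasiorder on the quotient A/ψ. -/
def blockFactor {A : Type*} {m : ℕ} (ρ : Set (Fin m → A)) (ψ : Setoid A) :
    Set (Fin m → Quotient ψ) :=
  {B | ∀ a : Fin m → A, (∀ i, Quotient.mk ψ (a i) = B i) → a ∈ ρ}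

section

variable {A : Type*} {m : ℕ} {ρ : Set (Fin m → A)}

theorem IsGenTransitive.mem_of_update_const_mem (hρ : IsGenTransitive ρ) {c : A}
    {a : Fin m → A} (ha : ∀ i, Function.update (fun _ => c) i (a i) ∈ ρ) : a ∈ ρ := by
  have hsymm : ∀ i j, Function.update (fun _ => c) i (a i) j =
      Function.update (fun _ => c) j (a j) i := by
    intro i j
    by_cases hij : i = j
    · subst hij; rfl
    · simp [hij, Ne.symm hij]
  simpa using hρ (fun i j => Function.update (fun _ => c) i (a i) j) ha
    (fun j => by simpa only [hsymm] using ha j)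

theorem IsGenTransitive.blockFactor (hρ : IsGenTransitive ρ) (ψ : Setoid A) :
    IsGenTransitive (blockFactor ρ ψ) := by
  intro M hrows hcols a ha
  let N : Fin m → Fin m → A := fun i j => if i = j then a i else (M i j).out
  have hN : ∀ i j, Quotient.mk ψ (N i j) = M i j := by
    intro i j
    by_cases hij : i = j
    · subst hij; simpa [N] using ha i
    · simp [N, hij]
  simpa [N] using hρ N (fun i => hrows i _ (hN i)) (fun j => hcols j _ (hN · j))

end

theorem blockFactor_gQuord_iff {A : Type*} {m : ℕ} (ρ : Set (Fin m → A))
    (h : IsGQuord ρ) (ψ : Setoid A) :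
    (∀ a b : A, ψ.r a b → ∀ t : Fin m → A, (∀ i, t i = a ∨ t i = b) → t ∈ ρ) ↔
      IsGQuord {B : Fin m → Quotient ψ |
        ∀ a : Fin m → A, (∀ i, Quotient.mk ψ (a i) = B i) → a ∈ ρ} := by
  refine ⟨fun hψ => ⟨?_, h.2.blockFactor ψ⟩, fun hgq a b hab t ht => ?_⟩
  · refine Quotient.ind fun c a ha => h.2.mem_of_update_const_mem (c := c) fun i => ?_
    refine hψ c (a i) (ψ.symm (Quotient.exact (ha i))) _ fun j => ?_
    rw [Function.update_apply]
    split_ifs <;> simp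
  · refine hgq.1 (Quotient.mk ψ a) t fun i => ?_
    rcases ht i with hi | hi <;> rw [hi]
    exact Quotient.sound (ψ.symm hab)
end

section
/- Decomposition theorem: (A) For every generalized quasiorder ρ ⊆ A^m, the factor relation ρ/ρ^⟨2⟩ on A/ρ^⟨2⟩ is a weak generalized partial order, and ρ = {(a₁,…,a_m) : ([a₁],…,[a_m]) ∈ ρ/ρ^⟨2⟩} where [a] is the ρ^⟨2⟩-class of a. (B) Conversely, given an equivalence relation σ on A and a weak generalized partial order τ on A/σ, the relation ρ := {(a₁,…,a_m) : ([a₁]_σ,…,[a_m]_σ) ∈ τ} is a generalized quasiorder with ρ^⟨2⟩ = σ and ρ/ρ^⟨2⟩ = τ. -/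
/-!
Write `π : A → A/σ` for the quotient map. Since `π ∘ -` is surjective on tuples, the relation
`π⁻¹ τ` on `A` and the relation `τ` on `A/σ` have the same reflexivity, generalized transitivity
and exchange behaviour, and `π(π⁻¹ τ) = τ`. Conversely, if `σ` consists of exchangeable pairs of
`ρ`, then exchanging coordinates one at a time shows `ρ = π⁻¹(π ρ)`. Taking `σ = ρ^⟨2⟩` gives
(A), and (B) follows because `τ` only exchanges equal classes.
-/

universe u

variable {A : Type u} {m : ℕ}

def IsWeakGPartialOrder (τ : Set (Fin m → A)) : Prop :=
  IsGQuord τ ∧ ∀ x y, Exch τ x y → x = y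

theorem mem_of_forall_exch {ρ : Set (Fin m → A)} {a b : Fin m → A}
    (hab : ∀ i, Exch ρ (a i) (b i)) (ha : a ∈ ρ) : b ∈ ρ := by
  have hS : ∀ S : Finset (Fin m), S.piecewise b a ∈ ρ := by
    intro S
    induction S using Finset.induction with
    | empty => simpa using ha
    | @insert j S hj ih =>
      have hfix : Function.update (S.piecewise b a) j (a j) = S.piecewise b a :=
        Function.update_eq_self_iff.mpr (S.piecewise_eq_of_notMem _ _ hj).symm
      rw [← hfix] at ih
      rw [Finset.piecewise_insert]
      exact (hab j j _).mp ih
  simpa using hS Finset.univ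

namespace Setoid

variable (s : Setoid A)

def factorRel (ρ : Set (Fin m → A)) : Set (Fin m → Quotient s) :=
  {B | ∃ a ∈ ρ, ∀ i, B i = Quotient.mk s (a i)}

def liftRel (τ : Set (Fin m → Quotient s)) : Set (Fin m → A) :=
  {a | Quotient.mk s ∘ a ∈ τ}

variable {s}

theorem mem_liftRel {τ : Set (Fin m → Quotient s)} {a : Fin m → A} :
    a ∈ s.liftRel τ ↔ Quotient.mk s ∘ a ∈ τ :=
  Iff.rfl

theorem mk_comp_out (B : Fin m → Quotient s) : Quotient.mk s ∘ (Quotient.out ∘ B) = B :=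
  funext fun i => Quotient.out_eq (B i)

theorem factorRel_liftRel (τ : Set (Fin m → Quotient s)) : s.factorRel (s.liftRel τ) = τ := by
  ext B
  constructor
  · rintro ⟨a, ha, hB⟩
    rwa [show B = Quotient.mk s ∘ a from funext hB]
  · intro hB
    exact ⟨Quotient.out ∘ B, by rwa [mem_liftRel, mk_comp_out],
      fun i => (Quotient.out_eq (B i)).symm⟩

theorem liftRel_factorRel {ρ : Set (Fin m → A)} (hs : ∀ a b, s.r a b → Exch ρ a b) :
    s.liftRel (s.factorRel ρ) = ρ := by
  ext a
  constructor
  · rintro ⟨c, hc, hac⟩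
    exact mem_of_forall_exch (fun i => hs _ _ (Quotient.exact (hac i).symm)) hc
  · intro ha
    exact ⟨a, ha, fun _ => rfl⟩

theorem isGQuord_liftRel_iff {τ : Set (Fin m → Quotient s)} :
    IsGQuord (s.liftRel τ) ↔ IsGQuord τ := by
  constructor
  · rintro ⟨hrefl, htrans⟩
    refine ⟨fun x => ?_, fun M hrow hcol => ?_⟩
    · simpa [mem_liftRel, Function.comp_def] using hrefl x.out
    · have := htrans (fun i j => (M i j).out)
        (fun i => by simpa [mem_liftRel, Function.comp_def] using hrow i)
        (fun j => by simpa [mem_liftRel, Function.comp_def] using hcol j)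
      simpa [mem_liftRel, Function.comp_def] using this
  · rintro ⟨hrefl, htrans⟩
    exact ⟨fun a => hrefl (Quotient.mk s a),
      fun M hrow hcol => htrans (fun i j => Quotient.mk s (M i j)) hrow hcol⟩

theorem exch_liftRel_iff {τ : Set (Fin m → Quotient s)} {a b : A} :
    Exch (s.liftRel τ) a b ↔ Exch τ (Quotient.mk s a) (Quotient.mk s b) := by
  have hupdate : ∀ i t c, Function.update t i c ∈ s.liftRel τ ↔
      Function.update (Quotient.mk s ∘ t) i (Quotient.mk s c) ∈ τ := by
    intro i t c
    rw [mem_liftRel, Function.comp_update]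
  constructor
  · intro h i T
    rw [← mk_comp_out T, ← hupdate, ← hupdate]
    exact h i _
  · intro h i t
    rw [hupdate, hupdate]
    exact h i _

theorem isWeakGPartialOrder_factorRel {ρ : Set (Fin m → A)} (hρ : IsGQuord ρ)
    (hs : ∀ a b, s.r a b ↔ Exch ρ a b) : IsWeakGPartialOrder (s.factorRel ρ) := by
  have hlift : s.liftRel (s.factorRel ρ) = ρ := liftRel_factorRel fun a b => (hs a b).mp
  refine ⟨isGQuord_liftRel_iff.mp (hlift.symm ▸ hρ), fun x y => ?_⟩
  refine Quotient.inductionOn₂ x y fun a b hab => Quotient.sound ((hs a b).mpr ?_)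
  rwa [← hlift, exch_liftRel_iff]

theorem exch_liftRel_iff_rel {τ : Set (Fin m → Quotient s)}
    (hτ : ∀ x y, Exch τ x y → x = y) {a b : A} : Exch (s.liftRel τ) a b ↔ s.r a b := by
  rw [exch_liftRel_iff, ← Quotient.eq]
  exact ⟨hτ _ _, fun h => h ▸ fun _ _ => Iff.rfl⟩

end Setoid

open Setoid

theorem gQuord_decomposition {A : Type*} {m : ℕ} :
    (∀ (ρ : Set (Fin m → A)) (s : Setoid A), IsGQuord ρ →
      (∀ a b : A, s.r a b ↔ Exch ρ a b) →
        IsGQuord {B : Fin m → Quotient s | ∃ a ∈ ρ, ∀ i, B i = Quotient.mk s (a i)} ∧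
        (∀ x y : Quotient s,
          Exch {B : Fin m → Quotient s | ∃ a ∈ ρ, ∀ i, B i = Quotient.mk s (a i)} x y →
            x = y) ∧
        (∀ a : Fin m → A, a ∈ ρ ↔
          (fun i => Quotient.mk s (a i)) ∈
            {B : Fin m → Quotient s | ∃ a ∈ ρ, ∀ i, B i = Quotient.mk s (a i)})) ∧
    (∀ (σ : Setoid A) (τ : Set (Fin m → Quotient σ)), IsGQuord τ →
      (∀ x y : Quotient σ, Exch τ x y → x = y) →
        IsGQuord {a : Fin m → A | (fun i => Quotient.mk σ (a i)) ∈ τ} ∧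
        (∀ a b : A,
          Exch {a : Fin m → A | (fun i => Quotient.mk σ (a i)) ∈ τ} a b ↔ σ.r a b) ∧
        {B : Fin m → Quotient σ |
          ∃ a ∈ {a : Fin m → A | (fun i => Quotient.mk σ (a i)) ∈ τ},
            ∀ i, B i = Quotient.mk σ (a i)} = τ) := by
  refine ⟨fun ρ s hρ hs => ?_, fun σ τ hτ hweak =>
    ⟨isGQuord_liftRel_iff.mpr hτ, fun _ _ => exch_liftRel_iff_rel hweak, factorRel_liftRel τ⟩⟩
  obtain ⟨hgq, hweak⟩ := isWeakGPartialOrder_factorRel hρ hs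
  have hlift : s.liftRel (s.factorRel ρ) = ρ := liftRel_factorRel fun a b => (hs a b).mp
  exact ⟨hgq, hweak, fun a => Set.ext_iff.mp hlift.symm a⟩
end

section
/- Let f : A^n → A be an operation that is idempotent (f(x,…,x) = x) and satisfies the entropic law f(f(x₁₁,…,x₁ₙ),…,f(xₙ₁,…,xₙₙ)) = f(f(x₁₁,…,xₙ₁),…,f(x₁ₙ,…,xₙₙ)) (f commutes with itself). Then the graph of f, graph(f) = {(a₁,…,aₙ,b) ∈ A^{n+1} : f(a₁,…,aₙ) = b}, is an (n+1)-ary generalized quasiorder on A if and only if f satisfies the absorption identity (AB_f): f(f(x₁₁,…,x₁ₙ), f(x₂₁,…,x₂ₙ), …, f(xₙ₁,…,xₙₙ)) = f(x₁₁, x₂₂, …, xₙₙ). -/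
theorem graph_gQuord_iff_absorption {A : Type*} {n : ℕ}
    (f : (Fin n → A) → A)
    (hid : ∀ a : A, f (fun _ => a) = a)
    (hC : ∀ x : Fin n → Fin n → A,
      f (fun i => f (x i)) = f (fun j => f (fun i => x i j))) :
    IsGQuord {t : Fin (n + 1) → A |
        f (fun i : Fin n => t i.castSucc) = t (Fin.last n)} ↔
      ∀ x : Fin n → Fin n → A, f (fun i => f (x i)) = f (fun i => x i i) := by
  constructor
  · rintro ⟨-, htr⟩ x
    set M : Fin (n + 1) → Fin (n + 1) → A := fun i =>
      Fin.lastCases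
        (fun j => Fin.lastCases (f fun k => f (x k)) (fun j' => f fun k => x k j') j)
        (fun i' j => Fin.lastCases (f (x i')) (fun j' => x i' j') j) i with hM
    have h := htr M ?_ ?_
    · have h' : f (fun i : Fin n => M i.castSucc i.castSucc) = M (Fin.last n) (Fin.last n) := h
      simp only [hM, Fin.lastCases_castSucc, Fin.lastCases_last] at h'
      exact h'.symm
    · intro i
      simp only [Set.mem_setOf_eq]
      refine Fin.lastCases ?_ (fun i' => ?_) i
      · simp only [hM, Fin.lastCases_castSucc, Fin.lastCases_last]
        exact (hC x).symm
      · simp only [hM, Fin.lastCases_castSucc, Fin.lastCases_last]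
    · intro j
      simp only [Set.mem_setOf_eq]
      refine Fin.lastCases ?_ (fun j' => ?_) j
      · simp only [hM, Fin.lastCases_castSucc, Fin.lastCases_last]
      · simp only [hM, Fin.lastCases_castSucc, Fin.lastCases_last]
  · intro hAB
    refine ⟨fun a => hid a, fun M hrow hcol => ?_⟩
    simp only [Set.mem_setOf_eq] at hrow hcol ⊢
    set x : Fin n → Fin n → A := fun i j => M i.castSucc j.castSucc with hx
    have key : f (fun i => x i i) = M (Fin.last n) (Fin.last n) := by
      calc f (fun i => x i i) = f (fun i => f (x i)) := (hAB x).symm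
        _ = f (fun j => f (fun i => x i j)) := hC x
        _ = f (fun j : Fin n => M (Fin.last n) j.castSucc) := by
            congr 1; funext j; exact hcol j.castSucc
        _ = M (Fin.last n) (Fin.last n) := hrow (Fin.last n)
    exact key
end
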